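/- arXiv:1608.07443 — 5 statements merged into one kernel-verified Lean document; each statement's English description precedes it below -/
import Mathlib

section
/- Nonnegativity is preserved in the SIR model: if S(0) ≥ 0 and I(0) ≥ 0, then for all t ≥ 0, S(t) ≥ 0 and I(t) ≥ 0. -/
/-!
Each equation of the model is linear in its own unknown once the other one is treated as a
given continuous coefficient: `S' = (-b I) S` and `I' = (b S - c) I`. A solution of
`f' = a f` is `f 0 * exp (∫₀ᵗ a)`, so it keeps the sign of `f 0`.
-/

open Set

theorem eq_mul_exp_integral_of_hasDerivAt_mul {a f : ℝ → ℝ} (ha : Continuous a)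
    (hf : ∀ t ≥ (0 : ℝ), HasDerivAt f (a t * f t) t) {T : ℝ} (hT : 0 ≤ T) :
    f T = f 0 * Real.exp (∫ s in (0 : ℝ)..T, a s) := by
  set g : ℝ → ℝ := fun t => ∫ s in (0 : ℝ)..t, a s
  have hg (t : ℝ) : HasDerivAt g (a t) t :=
    intervalIntegral.integral_hasDerivAt_right (ha.intervalIntegrable _ _)
      (ha.stronglyMeasurableAtFilter _ _) ha.continuousAt
  set F : ℝ → ℝ := fun t => f t * Real.exp (-g t)
  have hF_deriv : ∀ t ∈ Ico (0 : ℝ) T, HasDerivWithinAt F 0 (Ici t) t := by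
    intro t ht
    have h : HasDerivAt F 0 t :=
      ((hf t ht.1).mul (hg t).neg.exp).congr_deriv (by simp only [Pi.neg_apply]; ring)
    exact h.hasDerivWithinAt
  have hF_cont : ContinuousOn F (Icc 0 T) := fun t ht =>
    ((hf t ht.1).continuousAt.mul (hg t).continuousAt.neg.rexp).continuousWithinAt
  have hF_const : F T = F 0 :=
    constant_of_has_deriv_right_zero hF_cont hF_deriv T (right_mem_Icc.2 hT)
  calc f T = F T * Real.exp (g T) := by simp [F, mul_assoc, ← Real.exp_add]
    _ = f 0 * Real.exp (g T) := by simp [hF_const, F, g]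

theorem nonneg_of_hasDerivAt_mul {a f : ℝ → ℝ} (ha : ContinuousOn a (Ici 0))
    (hf : ∀ t ≥ (0 : ℝ), HasDerivAt f (a t * f t) t) (h0 : 0 ≤ f 0) :
    ∀ t ≥ (0 : ℝ), 0 ≤ f t := by
  have ha' : Continuous fun t => a (max t 0) :=
    ha.comp_continuous (continuous_id.max continuous_const) fun t => le_max_right t 0
  have hf' : ∀ t ≥ (0 : ℝ), HasDerivAt f (a (max t 0) * f t) t := fun t ht => by
    simpa only [max_eq_left ht] using hf t ht
  intro t ht
  rw [eq_mul_exp_integral_of_hasDerivAt_mul ha' hf' ht]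
  positivity

theorem sir_nonneg_preserved_general
    (b c : ℝ) (S I : ℝ → ℝ)
    (hS : ∀ t ≥ (0 : ℝ), HasDerivAt S (-(b * I t * S t)) t)
    (hI : ∀ t ≥ (0 : ℝ), HasDerivAt I (b * I t * S t - c * I t) t)
    (hS0 : 0 ≤ S 0) (hI0 : 0 ≤ I 0) :
    ∀ t ≥ (0 : ℝ), 0 ≤ S t ∧ 0 ≤ I t := by
  have hS_cont : ContinuousOn S (Ici 0) := fun t ht => (hS t ht).continuousAt.continuousWithinAt
  have hI_cont : ContinuousOn I (Ici 0) := fun t ht => (hI t ht).continuousAt.continuousWithinAt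
  have hS_nonneg := nonneg_of_hasDerivAt_mul (a := fun t => -(b * I t))
    (continuousOn_const.mul hI_cont).neg (fun t ht => by simpa only [neg_mul] using hS t ht) hS0
  have hI_nonneg := nonneg_of_hasDerivAt_mul (a := fun t => b * S t - c)
    ((continuousOn_const.mul hS_cont).sub continuousOn_const)
    (fun t ht => by convert hI t ht using 1; ring) hI0
  exact fun t ht => ⟨hS_nonneg t ht, hI_nonneg t ht⟩

/-- Nonnegativity is preserved in the SIR model. -/
theorem sir_nonneg_preserved
    (b c : ℝ) (hb : 0 < b) (hc : 0 < c) (S I R : ℝ → ℝ)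
    (hS : ∀ t ≥ (0 : ℝ), HasDerivAt S (-(b * I t * S t)) t)
    (hI : ∀ t ≥ (0 : ℝ), HasDerivAt I (b * I t * S t - c * I t) t)
    (hR : ∀ t ≥ (0 : ℝ), HasDerivAt R (c * I t) t)
    (hS0 : 0 ≤ S 0) (hI0 : 0 ≤ I 0) :
    ∀ t ≥ (0 : ℝ), 0 ≤ S t ∧ 0 ≤ I t :=
  sir_nonneg_preserved_general b c S I hS hI hS0 hI0
end

section
/- Convergence of the compartments: if S(0) ≥ 0, I(0) ≥ 0, and R(0) ≥ 0, then S(t) converges to a limit S(∞) as t → ∞, R(t) converges to a limit R(∞) as t → ∞, and I(t) converges to N - S(∞) - R(∞) as t → ∞, where N = S(0) + I(0) + R(0). -/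
/-!
Multiplying by an integrating factor shows that `S(t) e^{∫₀ᵗ bI}` and `I(t) e^{-∫₀ᵗ (bS - c)}`
are constant, so `S` and `I` stay nonnegative. Then `S` is nonincreasing and bounded below by `0`,
`R` is nondecreasing and, since `S + I + R` is conserved, bounded above by `N`. Both converge by
monotone convergence, and so does `I = N - S - R`.
-/

open Filter Set Real Topology

section MonotoneConvergence

variable {α β : Type*} [LinearOrder α] [ConditionallyCompleteLinearOrder β] [TopologicalSpace β]
  [OrderTopology β] {f : α → β} {a : α}

theorem MonotoneOn.exists_tendsto_atTop_of_bddAbove (hf : MonotoneOn f (Ici a))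
    (hbdd : BddAbove (f '' Ici a)) : ∃ l, Tendsto f atTop (𝓝 l) := by
  have hmono : Monotone fun t => f (max t a) := fun x y hxy =>
    hf (le_max_right x a) (le_max_right y a) (max_le_max_right a hxy)
  have hrange : BddAbove (range fun t => f (max t a)) :=
    hbdd.mono (range_subset_iff.2 fun t => mem_image_of_mem f (le_max_right t a))
  refine ⟨_, (tendsto_atTop_ciSup hmono hrange).congr' ?_⟩
  filter_upwards [eventually_ge_atTop a] with t ht
  rw [max_eq_left ht]

theorem AntitoneOn.exists_tendsto_atTop_of_bddBelow (hf : AntitoneOn f (Ici a))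
    (hbdd : BddBelow (f '' Ici a)) : ∃ l, Tendsto f atTop (𝓝 l) :=
  MonotoneOn.exists_tendsto_atTop_of_bddAbove (β := βᵒᵈ) hf.dual_right hbdd

end MonotoneConvergence

section Calculus

variable {f f' g : ℝ → ℝ} {a : ℝ}

theorem monotoneOn_Ici_of_hasDerivAt_nonneg (hf : ∀ t ≥ a, HasDerivAt f (f' t) t)
    (hf' : ∀ t ≥ a, 0 ≤ f' t) : MonotoneOn f (Ici a) :=
  monotoneOn_of_hasDerivWithinAt_nonneg (convex_Ici a)
    (fun t ht => (hf t ht).continuousAt.continuousWithinAt)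
    (fun t ht => (hf t (interior_subset ht)).hasDerivWithinAt)
    (fun t ht => hf' t (interior_subset ht))

theorem antitoneOn_Ici_of_hasDerivAt_nonpos (hf : ∀ t ≥ a, HasDerivAt f (f' t) t)
    (hf' : ∀ t ≥ a, f' t ≤ 0) : AntitoneOn f (Ici a) :=
  antitoneOn_of_hasDerivWithinAt_nonpos (convex_Ici a)
    (fun t ht => (hf t ht).continuousAt.continuousWithinAt)
    (fun t ht => (hf t (interior_subset ht)).hasDerivWithinAt)
    (fun t ht => hf' t (interior_subset ht))

theorem eq_of_hasDerivAt_zero_Ici (hf : ∀ t ≥ a, HasDerivAt f 0 t) : ∀ t ≥ a, f t = f a :=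
  fun t ht => constant_of_has_deriv_right_zero
    (fun x hx => (hf x hx.1).continuousAt.continuousWithinAt)
    (fun x hx => (hf x hx.1).hasDerivWithinAt) t (right_mem_Icc.2 ht)

theorem ContinuousOn.exists_hasDerivAt_Ici (hg : ContinuousOn g (Ici a)) :
    ∃ G : ℝ → ℝ, ∀ t ≥ a, HasDerivAt G (g t) t := by
  have hext : Continuous fun s => g (max s a) :=
    hg.comp_continuous (continuous_id.max continuous_const) fun s => le_max_right s a
  refine ⟨fun u => ∫ s in a..u, g (max s a), fun t ht => ?_⟩
  simpa [max_eq_left ht] using (hext.integral_hasStrictDerivAt a t).hasDerivAt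

theorem nonneg_of_hasDerivAt_mul_self (hg : ContinuousOn g (Ici a))
    (hf : ∀ t ≥ a, HasDerivAt f (g t * f t) t) (ha : 0 ≤ f a) : ∀ t ≥ a, 0 ≤ f t := by
  obtain ⟨G, hG⟩ := hg.exists_hasDerivAt_Ici
  have hconst : ∀ t ≥ a, f t * exp (-G t) = f a * exp (-G a) :=
    eq_of_hasDerivAt_zero_Ici (f := fun t => f t * exp (-G t)) fun t ht =>
      ((hf t ht).mul (hG t ht).neg.exp).congr_deriv (by ring)
  intro t ht
  rw [← mul_nonneg_iff_of_pos_right (exp_pos (-G t)), hconst t ht]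
  positivity

end Calculus

theorem sir_compartments_converge_general
    (b c : ℝ) (hb : 0 < b) (hc : 0 < c) (S I R : ℝ → ℝ)
    (hS : ∀ t ≥ (0 : ℝ), HasDerivAt S (-(b * I t * S t)) t)
    (hI : ∀ t ≥ (0 : ℝ), HasDerivAt I (b * I t * S t - c * I t) t)
    (hR : ∀ t ≥ (0 : ℝ), HasDerivAt R (c * I t) t)
    (hS0 : 0 ≤ S 0) (hI0 : 0 ≤ I 0) :
    ∃ Sinf Rinf : ℝ,
      Filter.Tendsto S Filter.atTop (nhds Sinf) ∧
      Filter.Tendsto R Filter.atTop (nhds Rinf) ∧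
      Filter.Tendsto I Filter.atTop (nhds (S 0 + I 0 + R 0 - Sinf - Rinf)) := by
  have hS_cont : ContinuousOn S (Ici 0) := fun t ht => (hS t ht).continuousAt.continuousWithinAt
  have hI_cont : ContinuousOn I (Ici 0) := fun t ht => (hI t ht).continuousAt.continuousWithinAt
  have hS_nonneg : ∀ t ≥ (0 : ℝ), 0 ≤ S t :=
    nonneg_of_hasDerivAt_mul_self (g := fun t => -(b * I t)) (by fun_prop)
      (fun t ht => by convert hS t ht using 1; ring) hS0
  have hI_nonneg : ∀ t ≥ (0 : ℝ), 0 ≤ I t :=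
    nonneg_of_hasDerivAt_mul_self (g := fun t => b * S t - c) (by fun_prop)
      (fun t ht => by convert hI t ht using 1; ring) hI0
  have hN : ∀ t ≥ (0 : ℝ), S t + I t + R t = S 0 + I 0 + R 0 :=
    eq_of_hasDerivAt_zero_Ici (f := fun t => S t + I t + R t) fun t ht =>
      (((hS t ht).add (hI t ht)).add (hR t ht)).congr_deriv (by ring)
  obtain ⟨Sinf, hS_lim⟩ := (antitoneOn_Ici_of_hasDerivAt_nonpos hS fun t ht =>
      neg_nonpos.2 (by have := hS_nonneg t ht; have := hI_nonneg t ht; positivity)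
    ).exists_tendsto_atTop_of_bddBelow ⟨0, by rintro _ ⟨t, ht, rfl⟩; exact hS_nonneg t ht⟩
  obtain ⟨Rinf, hR_lim⟩ := (monotoneOn_Ici_of_hasDerivAt_nonneg hR fun t ht =>
      mul_nonneg hc.le (hI_nonneg t ht)).exists_tendsto_atTop_of_bddAbove
    ⟨S 0 + I 0 + R 0, by
      rintro _ ⟨t, ht, rfl⟩
      linarith [hN t ht, hS_nonneg t ht, hI_nonneg t ht]⟩
  refine ⟨Sinf, Rinf, hS_lim, hR_lim, ((tendsto_const_nhds.sub hS_lim).sub hR_lim).congr' ?_⟩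
  filter_upwards [eventually_ge_atTop 0] with t ht
  linarith [hN t ht]

/-- Convergence of the compartments of the SIR model. -/
theorem sir_compartments_converge
    (b c : ℝ) (hb : 0 < b) (hc : 0 < c) (S I R : ℝ → ℝ)
    (hS : ∀ t ≥ (0 : ℝ), HasDerivAt S (-(b * I t * S t)) t)
    (hI : ∀ t ≥ (0 : ℝ), HasDerivAt I (b * I t * S t - c * I t) t)
    (hR : ∀ t ≥ (0 : ℝ), HasDerivAt R (c * I t) t)
    (hS0 : 0 ≤ S 0) (hI0 : 0 ≤ I 0) (hR0 : 0 ≤ R 0) :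
    ∃ Sinf Rinf : ℝ,
      Filter.Tendsto S Filter.atTop (nhds Sinf) ∧
      Filter.Tendsto R Filter.atTop (nhds Rinf) ∧
      Filter.Tendsto I Filter.atTop (nhds (S 0 + I 0 + R 0 - Sinf - Rinf)) :=
  sir_compartments_converge_general b c hb hc S I R hS hI hR hS0 hI0
end

section
/- Exponential decay bound for the informed compartment: if S(0) ≥ 0 and I(0) ≥ 0, then for all t ≥ 0, I(t) ≤ I(0)·exp((b·S(0) - c)·t). -/
/-!
The equations for `I` and `S` are linear in the unknown, `I' = (b S - c) I` and
`S' = -(b I) S`, so each of `I`, `S` is its initial value times the exponential of the integral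
of its rate. Hence `I` and `S` stay nonnegative, so `S' ≤ 0` and `S ≤ S 0`; the rate of `I` is
then at most `b S(0) - c`, which gives the bound.
-/

open Set Real intervalIntegral

section LinearODE

variable {h y : ℝ → ℝ} {a : ℝ}

theorem hasDerivWithinAt_integral_Icc {t u : ℝ} (hh : ContinuousOn h (Icc a t))
    (hu : u ∈ Icc a t) :
    HasDerivWithinAt (fun v => ∫ s in a..v, h s) (h u) (Icc a t) u := by
  have : Fact (u ∈ Icc a t) := ⟨hu⟩
  exact integral_hasDerivWithinAt_right
    (hh.mono (uIcc_of_le hu.1 ▸ Icc_subset_Icc_right hu.2)).intervalIntegrable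
    (hh.stronglyMeasurableAtFilter_nhdsWithin measurableSet_Icc u) (hh u hu)

theorem eq_mul_exp_integral_of_hasDerivAt (hh : ContinuousOn h (Ici a))
    (hy : ∀ t ≥ a, HasDerivAt y (h t * y t) t) {t : ℝ} (ht : a ≤ t) :
    y t = y a * exp (∫ s in a..t, h s) := by
  set F : ℝ → ℝ := fun u => ∫ s in a..u, h s
  have hg : ∀ u ∈ Icc a t, HasDerivWithinAt (fun v => y v * exp (-F v)) 0 (Icc a t) u := by
    intro u hu
    have hF := hasDerivWithinAt_integral_Icc (hh.mono Icc_subset_Ici_self) hu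
    exact ((hy u hu.1).hasDerivWithinAt.mul hF.neg.exp).congr_deriv (by ring)
  have hconst := constant_of_has_deriv_right_zero (fun u hu => (hg u hu).continuousWithinAt)
    (fun u hu => (hg u (Ico_subset_Icc_self hu)).mono_of_mem_nhdsWithin
      (Filter.mem_of_superset (Icc_mem_nhdsGE hu.2) (Icc_subset_Icc_left hu.1))) t ⟨ht, le_rfl⟩
  simp only [F, integral_same, neg_zero, exp_zero, mul_one] at hconst
  rw [← hconst, mul_assoc, ← exp_add, neg_add_cancel, exp_zero, mul_one]

theorem nonneg_of_hasDerivAt_mul_self_s7 (hh : ContinuousOn h (Ici a))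
    (hy : ∀ t ≥ a, HasDerivAt y (h t * y t) t) (hya : 0 ≤ y a) {t : ℝ} (ht : a ≤ t) :
    0 ≤ y t := by
  rw [eq_mul_exp_integral_of_hasDerivAt hh hy ht]
  positivity

theorem le_mul_exp_of_hasDerivAt_mul_self (hh : ContinuousOn h (Ici a))
    (hy : ∀ t ≥ a, HasDerivAt y (h t * y t) t) (hya : 0 ≤ y a) {k : ℝ}
    (hk : ∀ t ≥ a, h t ≤ k) {t : ℝ} (ht : a ≤ t) :
    y t ≤ y a * exp (k * (t - a)) := by
  have hint : ∫ s in a..t, h s ≤ k * (t - a) := by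
    calc ∫ s in a..t, h s ≤ ∫ _ in a..t, k :=
          integral_mono_on ht
            (hh.mono (uIcc_of_le ht ▸ Icc_subset_Ici_self)).intervalIntegrable
            intervalIntegrable_const (fun s hs => hk s hs.1)
      _ = k * (t - a) := by rw [integral_const, smul_eq_mul, mul_comm]
  rw [eq_mul_exp_integral_of_hasDerivAt hh hy ht]
  gcongr

end LinearODE

theorem sir_informed_exponential_bound_general
    (b c : ℝ) (hb : 0 < b) (S I : ℝ → ℝ)
    (hS : ∀ t ≥ (0 : ℝ), HasDerivAt S (-(b * I t * S t)) t)
    (hI : ∀ t ≥ (0 : ℝ), HasDerivAt I (b * I t * S t - c * I t) t)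
    (hS0 : 0 ≤ S 0) (hI0 : 0 ≤ I 0) :
    ∀ t ≥ (0 : ℝ), I t ≤ I 0 * Real.exp ((b * S 0 - c) * t) := by
  have hScont : ContinuousOn S (Ici 0) := fun t ht => (hS t ht).continuousAt.continuousWithinAt
  have hIcont : ContinuousOn I (Ici 0) := fun t ht => (hI t ht).continuousAt.continuousWithinAt
  have hS' : ∀ t ≥ (0 : ℝ), HasDerivAt S (-(b * I t) * S t) t := fun t ht => by
    simpa only [neg_mul] using hS t ht
  have hI' : ∀ t ≥ (0 : ℝ), HasDerivAt I ((b * S t - c) * I t) t := fun t ht => by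
    convert hI t ht using 1; ring
  have hrateI : ContinuousOn (fun t => b * S t - c) (Ici 0) :=
    (continuousOn_const.mul hScont).sub continuousOn_const
  have hI_nonneg : ∀ t ≥ (0 : ℝ), 0 ≤ I t := fun t =>
    nonneg_of_hasDerivAt_mul_self_s7 hrateI hI' hI0
  have hS_nonneg : ∀ t ≥ (0 : ℝ), 0 ≤ S t := fun t =>
    nonneg_of_hasDerivAt_mul_self_s7 (continuousOn_const.mul hIcont).neg hS' hS0
  have hS_anti : AntitoneOn S (Ici 0) := by
    refine antitoneOn_of_hasDerivWithinAt_nonpos (convex_Ici 0) hScont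
      (fun t ht => (hS t (interior_subset ht)).hasDerivWithinAt) (fun t ht => ?_)
    have ht : 0 ≤ t := interior_subset ht
    have := mul_nonneg (mul_nonneg hb.le (hI_nonneg t ht)) (hS_nonneg t ht)
    linarith
  intro t ht
  simpa only [sub_zero] using le_mul_exp_of_hasDerivAt_mul_self hrateI hI' hI0
    (fun s hs => sub_le_sub_right
      (mul_le_mul_of_nonneg_left (hS_anti self_mem_Ici hs hs) hb.le) c) ht

/-- Exponential decay bound for the informed compartment:
`I t ≤ I 0 * exp ((b * S 0 - c) * t)` for all `t ≥ 0`. -/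
theorem sir_informed_exponential_bound
    (b c : ℝ) (hb : 0 < b) (hc : 0 < c) (S I R : ℝ → ℝ)
    (hS : ∀ t ≥ (0 : ℝ), HasDerivAt S (-(b * I t * S t)) t)
    (hI : ∀ t ≥ (0 : ℝ), HasDerivAt I (b * I t * S t - c * I t) t)
    (hR : ∀ t ≥ (0 : ℝ), HasDerivAt R (c * I t) t)
    (hS0 : 0 ≤ S 0) (hI0 : 0 ≤ I 0) :
    ∀ t ≥ (0 : ℝ), I t ≤ I 0 * Real.exp ((b * S 0 - c) * t) :=
  sir_informed_exponential_bound_general b c hb S I hS hI hS0 hI0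
end

section
/- Maximum number of informed nodes: if S(t) > 0 for all t ≥ 0, and at some time t* ≥ 0 one has I'(t*) = 0 and I(t*) > 0, then I(t*) = I(0) + S(0) - (c/b)·ln(S(0)) - (c/b)·(1 - ln(c/b)). -/
/-! `I + S - (c/b) log S` is a first integral of the SIR system while `S > 0`. At a critical point
of `I` with `I > 0` the equation `I' = I (b S - c) = 0` forces `S = c/b`, and comparing the first
integral there with its value at time `0` gives the formula. -/

namespace SIR

noncomputable def firstIntegral (b c : ℝ) (S I : ℝ → ℝ) (t : ℝ) : ℝ :=
  I t + S t - c / b * Real.log (S t)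

variable {b c : ℝ} {S I : ℝ → ℝ}

theorem hasDerivAt_firstIntegral (hb : b ≠ 0) {t : ℝ} (hSt : S t ≠ 0)
    (hS : HasDerivAt S (-(b * I t * S t)) t) (hI : HasDerivAt I (b * I t * S t - c * I t) t) :
    HasDerivAt (firstIntegral b c S I) 0 t := by
  refine ((hI.add hS).sub ((hS.log hSt).const_mul (c / b))).congr_deriv ?_
  field_simp
  ring

theorem firstIntegral_eq_of_nonneg (hb : b ≠ 0)
    (hS : ∀ t ≥ (0 : ℝ), HasDerivAt S (-(b * I t * S t)) t)
    (hI : ∀ t ≥ (0 : ℝ), HasDerivAt I (b * I t * S t - c * I t) t)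
    (hSpos : ∀ t ≥ (0 : ℝ), 0 < S t) {t : ℝ} (ht : 0 ≤ t) :
    firstIntegral b c S I t = firstIntegral b c S I 0 := by
  have hF : ∀ x ≥ (0 : ℝ), HasDerivAt (firstIntegral b c S I) 0 x := fun x hx =>
    hasDerivAt_firstIntegral hb (hSpos x hx).ne' (hS x hx) (hI x hx)
  exact constant_of_has_deriv_right_zero
    (fun x hx => (hF x hx.1).continuousAt.continuousWithinAt)
    (fun x hx => (hF x hx.1).hasDerivWithinAt) t ⟨ht, le_rfl⟩

theorem eq_div_of_hasDerivAt_zero (hb : b ≠ 0) {t : ℝ}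
    (hI : HasDerivAt I (b * I t * S t - c * I t) t) (hcrit : deriv I t = 0) (hIt : I t ≠ 0) :
    S t = c / b := by
  have h : I t * (b * S t - c) = 0 := by rw [← hcrit, hI.deriv]; ring
  rw [eq_div_iff hb]
  linarith [(mul_eq_zero.mp h).resolve_left hIt]

end SIR

theorem sir_informed_maximum_value_general
    (b c : ℝ) (hb : 0 < b) (S I : ℝ → ℝ)
    (hS : ∀ t ≥ (0 : ℝ), HasDerivAt S (-(b * I t * S t)) t)
    (hI : ∀ t ≥ (0 : ℝ), HasDerivAt I (b * I t * S t - c * I t) t)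
    (hSpos : ∀ t ≥ (0 : ℝ), 0 < S t)
    (ts : ℝ) (hts : 0 ≤ ts) (hcrit : deriv I ts = 0) (hIpos : 0 < I ts) :
    I ts = I 0 + S 0 - c / b * Real.log (S 0) - c / b * (1 - Real.log (c / b)) := by
  have hconst := SIR.firstIntegral_eq_of_nonneg hb.ne' hS hI hSpos hts
  have hSts := SIR.eq_div_of_hasDerivAt_zero hb.ne' (hI ts hts) hcrit hIpos.ne'
  simp only [SIR.firstIntegral, hSts] at hconst
  linarith

/-- Maximum number of informed nodes: at a critical point `t*` of `I` with
`I t* > 0`, one has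
`I t* = I 0 + S 0 - (c/b) * ln (S 0) - (c/b) * (1 - ln (c/b))`. -/
theorem sir_informed_maximum_value
    (b c : ℝ) (hb : 0 < b) (hc : 0 < c) (S I R : ℝ → ℝ)
    (hS : ∀ t ≥ (0 : ℝ), HasDerivAt S (-(b * I t * S t)) t)
    (hI : ∀ t ≥ (0 : ℝ), HasDerivAt I (b * I t * S t - c * I t) t)
    (hR : ∀ t ≥ (0 : ℝ), HasDerivAt R (c * I t) t)
    (hSpos : ∀ t ≥ (0 : ℝ), 0 < S t)
    (ts : ℝ) (hts : 0 ≤ ts) (hcrit : deriv I ts = 0) (hIpos : 0 < I ts) :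
    I ts = I 0 + S 0 - c / b * Real.log (S 0) - c / b * (1 - Real.log (c / b)) :=
  sir_informed_maximum_value_general b c hb S I hS hI hSpos ts hts hcrit hIpos
end

section
/- Proposition 2 (persistence of susceptible nodes): if S(0) > 0, I(0) ≥ 0, and R(0) ≥ 0, then with N = S(0) + I(0) + R(0), one has S(t) ≥ S(0)·exp(-b·N/c) > 0 for all t ≥ 0; in particular the limit S(∞) = lim_{t→∞} S(t) satisfies S(∞) ≥ S(0)·exp(-b·N/c) > 0. -/
/-!
Along the flow `S · exp (b R / c)` is constant and `S + I + R = N` is conserved. The infected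
compartment solves the linear equation `I' = (b S - c) I`, so it stays nonnegative; hence
`R t - R 0 ≤ N` and `S t = S 0 · exp (-b (R t - R 0) / c) ≥ S 0 · exp (-b N / c)`. Finally
`S' = -b I S ≤ 0`, so `S` is nonincreasing and bounded below, and converges.
-/

open Set Filter Topology

lemma eq_of_hasDerivAt_zero_on_Ici {g : ℝ → ℝ} {a : ℝ}
    (hg : ∀ t ≥ a, HasDerivAt g 0 t) : ∀ t ≥ a, g t = g a := fun t ht =>
  constant_of_has_deriv_right_zero (fun x hx => (hg x hx.1).continuousAt.continuousWithinAt)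
    (fun x hx => (hg x hx.1).hasDerivWithinAt) t ⟨ht, le_rfl⟩

lemma exists_hasDerivAt_eq_on_Ici {f : ℝ → ℝ} {a : ℝ} (hf : ContinuousOn f (Ici a)) :
    ∃ F : ℝ → ℝ, ∀ t ≥ a, HasDerivAt F (f t) t := by
  have hext : Continuous fun s => f (max s a) :=
    hf.comp_continuous (continuous_id.max continuous_const) fun s => le_max_right s a
  refine ⟨fun u => ∫ s in a..u, f (max s a), fun t ht => ?_⟩
  simpa only [max_eq_left ht] using intervalIntegral.integral_hasDerivAt_right (b := t)
    (hext.intervalIntegrable a t) (hext.stronglyMeasurableAtFilter _ _) hext.continuousAt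

/-- The integrating factor `exp (-∫ a)` turns `f' = a f` into `(f exp (-∫ a))' = 0`. -/
lemma nonneg_of_hasDerivAt_eq_mul_self {a f : ℝ → ℝ} {t₀ : ℝ} (ha : ContinuousOn a (Ici t₀))
    (hf : ∀ t ≥ t₀, HasDerivAt f (a t * f t) t) (h₀ : 0 ≤ f t₀) : ∀ t ≥ t₀, 0 ≤ f t := by
  obtain ⟨A, hA⟩ := exists_hasDerivAt_eq_on_Ici ha
  have hconst := eq_of_hasDerivAt_zero_on_Ici
    (g := fun t => f t * Real.exp (-A t)) fun t ht =>
      ((hf t ht).mul (hA t ht).neg.exp).congr_deriv (by ring)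
  intro t ht
  have hprod : 0 ≤ f t * Real.exp (-A t) := hconst t ht ▸ mul_nonneg h₀ (Real.exp_pos _).le
  exact nonneg_of_mul_nonneg_left hprod (Real.exp_pos _)

lemma AntitoneOn.exists_tendsto_atTop_of_forall_ge {f : ℝ → ℝ} {a m : ℝ}
    (hf : AntitoneOn f (Ici a)) (hm : ∀ t ≥ a, m ≤ f t) :
    ∃ l, Tendsto f atTop (𝓝 l) ∧ m ≤ l := by
  set g : ℝ → ℝ := fun t => f (max t a)
  have hg : Antitone g := fun x y hxy =>
    hf (le_max_right x a) (le_max_right y a) (max_le_max_right a hxy)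
  have hgm : ∀ t, m ≤ g t := fun t => hm _ (le_max_right t a)
  refine ⟨⨅ t, g t, (tendsto_atTop_ciInf hg ⟨m, ?_⟩).congr' ?_, le_ciInf hgm⟩
  · rintro _ ⟨t, rfl⟩
    exact hgm t
  · filter_upwards [eventually_ge_atTop a] with t ht
    simp only [g, max_eq_left ht]

section SIR

variable {b c : ℝ} {S I R : ℝ → ℝ}

lemma sir_total_eq (hS : ∀ t ≥ (0 : ℝ), HasDerivAt S (-(b * I t * S t)) t)
    (hI : ∀ t ≥ (0 : ℝ), HasDerivAt I (b * I t * S t - c * I t) t)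
    (hR : ∀ t ≥ (0 : ℝ), HasDerivAt R (c * I t) t) :
    ∀ t ≥ (0 : ℝ), S t + I t + R t = S 0 + I 0 + R 0 :=
  eq_of_hasDerivAt_zero_on_Ici fun t ht =>
    (((hS t ht).add (hI t ht)).add (hR t ht)).congr_deriv (by ring)

lemma sir_susceptible_eq (hc : c ≠ 0)
    (hS : ∀ t ≥ (0 : ℝ), HasDerivAt S (-(b * I t * S t)) t)
    (hR : ∀ t ≥ (0 : ℝ), HasDerivAt R (c * I t) t) :
    ∀ t ≥ (0 : ℝ), S t = S 0 * Real.exp (-(b / c * (R t - R 0))) := by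
  have hconst := eq_of_hasDerivAt_zero_on_Ici
    (g := fun t => S t * Real.exp (b / c * R t)) fun t ht => by
      refine ((hS t ht).mul ((hR t ht).const_mul (b / c)).exp).congr_deriv ?_
      field_simp
      ring
  intro t ht
  have hinv : S t * Real.exp (b / c * R t) = S 0 * Real.exp (b / c * R 0) := hconst t ht
  rw [mul_sub, neg_sub, Real.exp_sub, ← mul_div_assoc, ← hinv]
  field_simp

lemma sir_infected_nonneg (hS : ∀ t ≥ (0 : ℝ), HasDerivAt S (-(b * I t * S t)) t)
    (hI : ∀ t ≥ (0 : ℝ), HasDerivAt I (b * I t * S t - c * I t) t) (hI0 : 0 ≤ I 0) :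
    ∀ t ≥ (0 : ℝ), 0 ≤ I t :=
  nonneg_of_hasDerivAt_eq_mul_self (a := fun t => b * S t - c)
    (fun t ht => (((hS t ht).continuousAt.const_mul b).sub continuousAt_const).continuousWithinAt)
    (fun t ht => by convert hI t ht using 1; ring) hI0

lemma sir_susceptible_antitoneOn (hb : 0 ≤ b)
    (hS : ∀ t ≥ (0 : ℝ), HasDerivAt S (-(b * I t * S t)) t)
    (hI : ∀ t ≥ (0 : ℝ), 0 ≤ I t) (hSnn : ∀ t ≥ (0 : ℝ), 0 ≤ S t) :
    AntitoneOn S (Ici 0) :=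
  antitoneOn_of_hasDerivWithinAt_nonpos (convex_Ici 0)
    (fun t ht => (hS t ht).continuousAt.continuousWithinAt)
    (fun t ht => (hS t (interior_subset ht)).hasDerivWithinAt)
    fun t ht => by
      have ht : (0 : ℝ) ≤ t := interior_subset ht
      simpa using mul_nonneg (mul_nonneg hb (hI t ht)) (hSnn t ht)

end SIR

/-- Proposition 2 (persistence of susceptible nodes): with
`N = S 0 + I 0 + R 0`, one has `S t ≥ S 0 * exp (-(b * N / c)) > 0` for all
`t ≥ 0`; in particular the limit `S ∞` satisfies the same lower bound. -/
theorem sir_susceptible_persistence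
    (b c : ℝ) (hb : 0 < b) (hc : 0 < c) (S I R : ℝ → ℝ)
    (hS : ∀ t ≥ (0 : ℝ), HasDerivAt S (-(b * I t * S t)) t)
    (hI : ∀ t ≥ (0 : ℝ), HasDerivAt I (b * I t * S t - c * I t) t)
    (hR : ∀ t ≥ (0 : ℝ), HasDerivAt R (c * I t) t)
    (hS0 : 0 < S 0) (hI0 : 0 ≤ I 0) (hR0 : 0 ≤ R 0) :
    (∀ t ≥ (0 : ℝ), S 0 * Real.exp (-(b * (S 0 + I 0 + R 0) / c)) ≤ S t) ∧
    0 < S 0 * Real.exp (-(b * (S 0 + I 0 + R 0) / c)) ∧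
    ∃ Sinf : ℝ, Filter.Tendsto S Filter.atTop (nhds Sinf) ∧
      S 0 * Real.exp (-(b * (S 0 + I 0 + R 0) / c)) ≤ Sinf := by
  have hSeq := sir_susceptible_eq hc.ne' hS hR
  have hSpos : ∀ t ≥ (0 : ℝ), 0 < S t := fun t ht => hSeq t ht ▸ by positivity
  have hInn := sir_infected_nonneg hS hI hI0
  have hbound : ∀ t ≥ (0 : ℝ), S 0 * Real.exp (-(b * (S 0 + I 0 + R 0) / c)) ≤ S t := by
    intro t ht
    have hRt : R t - R 0 ≤ S 0 + I 0 + R 0 := by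
      linarith [sir_total_eq hS hI hR t ht, hSpos t ht, hInn t ht]
    rw [hSeq t ht, mul_div_right_comm]
    gcongr
  refine ⟨hbound, by positivity, ?_⟩
  exact (sir_susceptible_antitoneOn hb.le hS hInn fun t ht => (hSpos t ht).le)
    |>.exists_tendsto_atTop_of_forall_ge hbound
end
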